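/- arXiv:1108.3139 — 3 statements merged into one kernel-verified Lean document; each statement's English description precedes it below -/
import Mathlib

section
/- Let B1, B2 be I-crystals, let b1 ∈ B1 and b2 ∈ B2 be arbitrary elements, and let i ∈ I. If f_i b1 ≠ 0, then there exist b2' ∈ B2 and a positive integer m such that f_i b1 ⊗ b2 = f_i^m (b1 ⊗ b2') in B1 ⊗ B2. -/
/-- An `I`-crystal on a carrier `B`: raising/lowering operators `e i, f i : B → B ⊔ {0}`
(encoded via `Option B`), mutually inverse where defined, with all strings finite. -/
structure Crystal (I : Type*) (B : Type*) where
  e : I → B → Option B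
  f : I → B → Option B
  ef : ∀ (i : I) (b b' : B), e i b = some b' → f i b' = some b
  fe : ∀ (i : I) (b b' : B), f i b = some b' → e i b' = some b
  e_bounded : ∀ (i : I) (b : B), ∃ k : ℕ, (fun o => o.bind (e i))^[k] (some b) = none
  f_bounded : ∀ (i : I) (b : B), ∃ k : ℕ, (fun o => o.bind (f i))^[k] (some b) = none

/-- The largest `k` such that `e^k b ≠ 0`, for a partial map `e : B → B ⊔ {0}`. -/
noncomputable def epsOf {B : Type*} (e : B → Option B) (b : B) : ℕ :=
  sSup {k : ℕ | (fun o => o.bind e)^[k] (some b) ≠ none}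

/-- `ε_i(b) = max {k ≥ 0 | e_i^k b ≠ 0}`. -/
noncomputable def Crystal.eps {I B : Type*} (c : Crystal I B) (i : I) (b : B) : ℕ :=
  epsOf (c.e i) b

/-- `φ_i(b) = max {k ≥ 0 | f_i^k b ≠ 0}`. -/
noncomputable def Crystal.phi {I B : Type*} (c : Crystal I B) (i : I) (b : B) : ℕ :=
  epsOf (c.f i) b

/-- The raising operators of the tensor product crystal `B1 ⊗ B2`. -/
noncomputable def tensorE {I B1 B2 : Type*} (c1 : Crystal I B1) (c2 : Crystal I B2)
    (i : I) (p : B1 × B2) : Option (B1 × B2) :=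
  if c2.eps i p.2 ≤ c1.phi i p.1 then (c1.e i p.1).map (fun x => (x, p.2))
  else (c2.e i p.2).map (fun x => (p.1, x))

/-- The lowering operators of the tensor product crystal `B1 ⊗ B2`. -/
noncomputable def tensorF {I B1 B2 : Type*} (c1 : Crystal I B1) (c2 : Crystal I B2)
    (i : I) (p : B1 × B2) : Option (B1 × B2) :=
  if c2.eps i p.2 < c1.phi i p.1 then (c1.f i p.1).map (fun x => (x, p.2))
  else (c2.f i p.2).map (fun x => (p.1, x))


private lemma iterBind_none {B : Type*} (g : B → Option B) (k : ℕ) :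
    (fun o => o.bind g)^[k] (none : Option B) = none := by
  induction k with
  | zero => rfl
  | succ k ih => rw [Function.iterate_succ_apply]; simpa using ih

private lemma iterBind_succ {B : Type*} (g : B → Option B) (k : ℕ) (b : B) :
    (fun o => o.bind g)^[k+1] (some b) = (fun o => o.bind g)^[k] (g b) := by
  rw [Function.iterate_succ_apply]; rfl

private lemma bddS {B : Type*} (g : B → Option B) (b : B)
    (hb : ∃ k, (fun o => o.bind g)^[k] (some b) = none) :
    BddAbove {k : ℕ | (fun o => o.bind g)^[k] (some b) ≠ none} := by
  obtain ⟨k, hk⟩ := hb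
  refine ⟨k, fun m hm => ?_⟩
  by_contra hlt
  push_neg at hlt
  apply hm
  have : (fun o => o.bind g)^[(m - k) + k] (some b) = none := by
    rw [Function.iterate_add_apply, hk, iterBind_none]
  rwa [Nat.sub_add_cancel hlt.le] at this

private lemma epsOf_isGreatest {B : Type*} (g : B → Option B) (b : B)
    (hbd : ∃ k, (fun o => o.bind g)^[k] (some b) = none) :
    IsGreatest {k : ℕ | (fun o => o.bind g)^[k] (some b) ≠ none} (epsOf g b) := by
  have hne : ({k : ℕ | (fun o => o.bind g)^[k] (some b) ≠ none}).Nonempty :=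
    ⟨0, by simp⟩
  exact ⟨Nat.sSup_mem hne (bddS g b hbd), fun m hm => le_csSup (bddS g b hbd) hm⟩

private lemma epsOf_succ {B : Type*} (g : B → Option B)
    (hbd : ∀ b, ∃ k, (fun o => o.bind g)^[k] (some b) = none)
    {b b' : B} (h : g b = some b') :
    epsOf g b = epsOf g b' + 1 := by
  have hg' := epsOf_isGreatest g b' (hbd b')
  unfold epsOf
  apply IsGreatest.csSup_eq
  constructor
  · show (fun o => o.bind g)^[epsOf g b' + 1] (some b) ≠ none
    rw [iterBind_succ, h]
    exact hg'.1
  · intro m hm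
    match m with
    | 0 => omega
    | j + 1 =>
      have hj : (fun o => o.bind g)^[j] (some b') ≠ none := by
        have hm' : (fun o => o.bind g)^[j+1] (some b) ≠ none := hm
        rwa [iterBind_succ, h] at hm'
      exact Nat.succ_le_succ (hg'.2 hj)

private lemma exists_iter {B : Type*} (g : B → Option B)
    (hbd : ∀ b, ∃ k, (fun o => o.bind g)^[k] (some b) = none)
    (b : B) {k : ℕ} (hk : k ≤ epsOf g b) :
    ∃ c, (fun o => o.bind g)^[k] (some b) = some c := by
  have hg := epsOf_isGreatest g b (hbd b)
  have hne : (fun o => o.bind g)^[k] (some b) ≠ none := by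
    intro hnone
    apply hg.1
    rw [show epsOf g b = (epsOf g b - k) + k by omega, Function.iterate_add_apply,
      hnone, iterBind_none]
  cases hcase : (fun o => o.bind g)^[k] (some b) with
  | none => exact absurd hcase hne
  | some c => exact ⟨c, rfl⟩

private lemma epsOf_iter {B : Type*} (g : B → Option B)
    (hbd : ∀ b, ∃ k, (fun o => o.bind g)^[k] (some b) = none) :
    ∀ (j : ℕ) (b c : B), (fun o => o.bind g)^[j] (some b) = some c →
      epsOf g b = epsOf g c + j := by
  intro j
  induction j with
  | zero => intro b c hc; simp at hc; subst hc; rfl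
  | succ j ih =>
    intro b c hc
    rw [iterBind_succ] at hc
    cases hgb : g b with
    | none => rw [hgb, iterBind_none] at hc; exact absurd hc (by simp)
    | some b'' =>
      rw [hgb] at hc
      rw [epsOf_succ g hbd hgb, ih b'' c hc]
      omega

private lemma chainB {I B1 B2 : Type*} (c1 : Crystal I B1) (c2 : Crystal I B2)
    (i : I) (b1' : B1) (b2 : B2) :
    ∀ (j : ℕ) (c : B2),
      (fun o => o.bind (c2.e i))^[j] (some b2) = some c →
      (j = 0 ∨ c1.phi i b1' + j ≤ c2.eps i b2) →
      (fun o => o.bind (tensorF c1 c2 i))^[j] (some (b1', c)) = some (b1', b2) := by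
  intro j
  induction j with
  | zero => intro c hc _; simp at hc; subst hc; rfl
  | succ j ih =>
    intro c hc hcond
    have hcond' : c1.phi i b1' + (j + 1) ≤ c2.eps i b2 := by omega
    rw [Function.iterate_succ_apply'] at hc
    cases hc' : (fun o => o.bind (c2.e i))^[j] (some b2) with
    | none => rw [hc'] at hc; exact absurd hc (by simp)
    | some c' =>
      rw [hc'] at hc
      have hec' : c2.e i c' = some c := by simpa using hc
      have hfc : c2.f i c = some c' := c2.ef i c' c hec'
      have heps : c2.eps i b2 = c2.eps i c + (j + 1) := by
        have := epsOf_iter (c2.e i) (c2.e_bounded i) (j + 1) b2 c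
          (by rw [Function.iterate_succ_apply', hc']; exact hc)
        exact this
      have hnotlt : ¬ c2.eps i c < c1.phi i b1' := by omega
      have hstep : tensorF c1 c2 i (b1', c) = some (b1', c') := by
        unfold tensorF
        rw [if_neg hnotlt, hfc]
        rfl
      rw [iterBind_succ, hstep]
      exact ih c' hc' (by omega)

/-- if `f_i b1 ≠ 0` then there are `b2' ∈ B2` and `m > 0` with
`f_i b1 ⊗ b2 = f_i^m (b1 ⊗ b2')` in `B1 ⊗ B2`. -/
theorem tensor_f_reach {I B1 B2 : Type*} (c1 : Crystal I B1) (c2 : Crystal I B2)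
    (i : I) (b1 : B1) (b2 : B2) (h : c1.f i b1 ≠ none) :
    ∃ (b2' : B2) (m : ℕ), 0 < m ∧
      (c1.f i b1).map (fun x => (x, b2))
        = (fun o => o.bind (tensorF c1 c2 i))^[m] (some (b1, b2')) := by
  cases hb1' : c1.f i b1 with
  | none => exact absurd hb1' h
  | some b1' =>
  have hphi : c1.phi i b1 = c1.phi i b1' + 1 :=
    epsOf_succ (c1.f i) (c1.f_bounded i) hb1'
  set φ := c1.phi i b1 with hφ
  set ε := c2.eps i b2 with hε
  set k := ε + 1 - φ with hk
  have hkε : k ≤ ε := by omega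
  obtain ⟨c, hc⟩ := exists_iter (c2.e i) (c2.e_bounded i) b2 hkε
  have hepsc : ε = c2.eps i c + k := epsOf_iter (c2.e i) (c2.e_bounded i) k b2 c hc
  have hlt : c2.eps i c < φ := by omega
  have hstep : tensorF c1 c2 i (b1, c) = some (b1', c) := by
    unfold tensorF
    rw [if_pos hlt, hb1']
    rfl
  refine ⟨c, k + 1, Nat.succ_pos k, ?_⟩
  rw [iterBind_succ, hstep, chainB c1 c2 i b1' b2 k c hc (by omega)]
  rfl
end

section
/- Let B1 and B2 be combinatorially perfect I-crystals (with respect to fixed positive integers (a_i^∨)_{i∈I} satisfying a_0^∨ = 1) with lev(B1) ≤ lev(B2). Then an element b1 ⊗ b2 ∈ B1 ⊗ B2 belongs to (B1 ⊗ B2)_min if and only if b2 ∈ (B2)_min and ε_i(b2) ≥ φ_i(b1) for all i ∈ I. Moreover, in this case ε_i(b1 ⊗ b2) = ε_i(b2) + ε_i(b1) − φ_i(b1) and φ_i(b1 ⊗ b2) = φ_i(b2) for all i ∈ I. -/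
/-- `⟨ε(b), K⟩ = Σ_i a_i^∨ ε_i(b)`, the level of the weight `ε(b)`. -/
noncomputable def levK {I B : Type*} [Fintype I] (a : I → ℕ) (c : Crystal I B) (b : B) : ℕ :=
  ∑ i, a i * c.eps i b

/-- `lev(B) = min_{b ∈ B} ⟨ε(b), K⟩`. -/
noncomputable def lev {I B : Type*} [Fintype I] (a : I → ℕ) (c : Crystal I B) : ℕ :=
  sInf (Set.range (levK a c))

/-- A level-zero crystal `B` is combinatorially perfect of level `l` if it is finite and
nonempty, `lev(B) = l`, and `ε` and `φ` restrict to bijections from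
`B_min = {b | ⟨ε(b), K⟩ = l}` onto `{λ ∈ ℤ_{≥0}^I | ⟨λ, K⟩ = l}`. -/
structure IsPerfect {I B : Type*} [Fintype I] (a : I → ℕ) (c : Crystal I B) (l : ℕ) : Prop where
  finite : Finite B
  nonempty : Nonempty B
  level_zero : ∀ b : B, (∑ i, a i * c.eps i b) = ∑ i, a i * c.phi i b
  lev_eq : lev a c = l
  eps_bij : Set.BijOn (fun b i => c.eps i b)
    {b | levK a c b = l} {lam : I → ℕ | ∑ i, a i * lam i = l}
  phi_bij : Set.BijOn (fun b i => c.phi i b)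
    {b | levK a c b = l} {lam : I → ℕ | ∑ i, a i * lam i = l}

/-- The level of the tensor product crystal `B1 ⊗ B2`. -/
noncomputable def tensorLev {I B1 B2 : Type*} [Fintype I] (a : I → ℕ)
    (c1 : Crystal I B1) (c2 : Crystal I B2) : ℕ :=
  sInf (Set.range (fun p : B1 × B2 => ∑ i, a i * epsOf (tensorE c1 c2 i) p))

section IterateBind

variable {B : Type*} (e : B → Option B)

theorem iterate_bind_none (k : ℕ) : (fun o : Option B => o.bind e)^[k] none = none :=
  Function.iterate_fixed rfl k

theorem iterate_bind_some_succ (b : B) (k : ℕ) :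
    (fun o : Option B => o.bind e)^[k + 1] (some b) = (fun o : Option B => o.bind e)^[k] (e b) :=
  Function.iterate_succ_apply _ _ _

theorem iterate_bind_eq_none_mono {k m : ℕ} (hkm : k ≤ m) {x : Option B}
    (h : (fun o : Option B => o.bind e)^[k] x = none) :
    (fun o : Option B => o.bind e)^[m] x = none := by
  obtain ⟨j, rfl⟩ := Nat.exists_eq_add_of_le hkm
  rw [Nat.add_comm, Function.iterate_add_apply, h, iterate_bind_none]

theorem epsOf_eq_of_iterate {b : B} {n : ℕ}
    (hn : (fun o : Option B => o.bind e)^[n] (some b) ≠ none)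
    (hn1 : (fun o : Option B => o.bind e)^[n + 1] (some b) = none) :
    epsOf e b = n := by
  have hub : n ∈ upperBounds {k | (fun o : Option B => o.bind e)^[k] (some b) ≠ none} :=
    fun k hk => by_contra fun hlt => hk (iterate_bind_eq_none_mono e (by omega) hn1)
  exact le_antisymm (csSup_le ⟨n, hn⟩ hub) (le_csSup ⟨n, hub⟩ hn)

theorem iterate_bind_epsOf {b : B}
    (hb : ∃ k, (fun o : Option B => o.bind e)^[k] (some b) = none) :
    (fun o : Option B => o.bind e)^[epsOf e b] (some b) ≠ none ∧
      (fun o : Option B => o.bind e)^[epsOf e b + 1] (some b) = none := by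
  obtain ⟨k, hk⟩ := hb
  have hub : k ∈ upperBounds {j | (fun o : Option B => o.bind e)^[j] (some b) ≠ none} :=
    fun j hj => by_contra fun hlt => hj (iterate_bind_eq_none_mono e (by omega) hk)
  have hmem : epsOf e b ∈ {j | (fun o : Option B => o.bind e)^[j] (some b) ≠ none} :=
    Nat.sSup_mem ⟨0, by simp⟩ ⟨k, hub⟩
  refine ⟨hmem, by_contra fun h => ?_⟩
  have : epsOf e b + 1 ≤ epsOf e b := le_csSup ⟨k, hub⟩ h
  omega

theorem epsOf_eq_zero {b : B} (he : e b = none) : epsOf e b = 0 :=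
  epsOf_eq_of_iterate e (by simp) (by rw [iterate_bind_some_succ, he, iterate_bind_none])

theorem epsOf_eq_succ {b b' : B} (he : e b = some b')
    (hb' : ∃ k, (fun o : Option B => o.bind e)^[k] (some b') = none) :
    epsOf e b = epsOf e b' + 1 := by
  obtain ⟨hne, hnone⟩ := iterate_bind_epsOf e hb'
  exact epsOf_eq_of_iterate e (by rwa [iterate_bind_some_succ, he])
    (by rwa [iterate_bind_some_succ, he])

theorem epsOf_eq_of_recursion (h : B → ℕ) (h0 : ∀ b, e b = none → h b = 0)
    (hs : ∀ b b', e b = some b' → h b = h b' + 1) (b : B) :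
    epsOf e b = h b := by
  suffices key : ∀ n (b : B), h b = n →
      (fun o : Option B => o.bind e)^[n] (some b) ≠ none ∧
        (fun o : Option B => o.bind e)^[n + 1] (some b) = none from
    epsOf_eq_of_iterate e (key _ b rfl).1 (key _ b rfl).2
  intro n
  induction n with
  | zero =>
    intro b hb
    refine ⟨by simp, ?_⟩
    cases he : e b with
    | none => rw [iterate_bind_some_succ, he, iterate_bind_none]
    | some b' => have := hs b b' he; omega
  | succ n ih =>
    intro b hb
    cases he : e b with
    | none => have := h0 b he; omega
    | some b' =>
      have hb' : h b' = n := by have := hs b b' he; omega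
      simpa only [iterate_bind_some_succ, he] using ih b' hb'

end IterateBind

namespace Crystal

variable {I B : Type*} (c : Crystal I B) (i : I) {b b' : B}

theorem eps_eq_zero (he : c.e i b = none) : c.eps i b = 0 := epsOf_eq_zero _ he

theorem eps_eq_succ (he : c.e i b = some b') : c.eps i b = c.eps i b' + 1 :=
  epsOf_eq_succ _ he (c.e_bounded i b')

theorem phi_eq_zero (hf : c.f i b = none) : c.phi i b = 0 := epsOf_eq_zero _ hf

theorem phi_eq_succ (hf : c.f i b = some b') : c.phi i b = c.phi i b' + 1 :=
  epsOf_eq_succ _ hf (c.f_bounded i b')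

theorem phi_of_e_eq_some (he : c.e i b = some b') : c.phi i b' = c.phi i b + 1 :=
  c.phi_eq_succ i (c.ef i b b' he)

theorem eps_of_f_eq_some (hf : c.f i b = some b') : c.eps i b' = c.eps i b + 1 :=
  c.eps_eq_succ i (c.fe i b b' hf)

end Crystal

section Tensor

variable {I B1 B2 : Type*} (c1 : Crystal I B1) (c2 : Crystal I B2) (i : I)

theorem epsOf_tensorE (p : B1 × B2) :
    epsOf (tensorE c1 c2 i) p = c1.eps i p.1 + (c2.eps i p.2 - c1.phi i p.1) := by
  refine epsOf_eq_of_recursion _ (fun p => c1.eps i p.1 + (c2.eps i p.2 - c1.phi i p.1)) ?_ ?_ p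
  · rintro ⟨x1, x2⟩ hnone
    simp only [tensorE] at hnone ⊢
    split_ifs at hnone
    · have := c1.eps_eq_zero i (Option.map_eq_none_iff.mp hnone); omega
    · have := c2.eps_eq_zero i (Option.map_eq_none_iff.mp hnone); omega
  · rintro ⟨x1, x2⟩ ⟨y1, y2⟩ hsome
    simp only [tensorE] at hsome ⊢
    split_ifs at hsome
    · obtain ⟨x, hx, ⟨⟩⟩ := Option.map_eq_some_iff.mp hsome
      have := c1.eps_eq_succ i hx
      have := c1.phi_of_e_eq_some i hx
      omega
    · obtain ⟨x, hx, ⟨⟩⟩ := Option.map_eq_some_iff.mp hsome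
      have := c2.eps_eq_succ i hx
      omega

theorem epsOf_tensorF (p : B1 × B2) :
    epsOf (tensorF c1 c2 i) p = c2.phi i p.2 + (c1.phi i p.1 - c2.eps i p.2) := by
  refine epsOf_eq_of_recursion _ (fun p => c2.phi i p.2 + (c1.phi i p.1 - c2.eps i p.2)) ?_ ?_ p
  · rintro ⟨x1, x2⟩ hnone
    simp only [tensorF] at hnone ⊢
    split_ifs at hnone
    · have := c1.phi_eq_zero i (Option.map_eq_none_iff.mp hnone); omega
    · have := c2.phi_eq_zero i (Option.map_eq_none_iff.mp hnone); omega
  · rintro ⟨x1, x2⟩ ⟨y1, y2⟩ hsome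
    simp only [tensorF] at hsome ⊢
    split_ifs at hsome
    · obtain ⟨x, hx, ⟨⟩⟩ := Option.map_eq_some_iff.mp hsome
      have := c1.phi_eq_succ i hx
      omega
    · obtain ⟨x, hx, ⟨⟩⟩ := Option.map_eq_some_iff.mp hsome
      have := c2.phi_eq_succ i hx
      have := c2.eps_of_f_eq_some i hx
      omega

end Tensor

theorem sum_mul_tsub_eq_zero_iff {I : Type*} [Fintype I] {a : I → ℕ} (ha : ∀ i, 0 < a i)
    (x y : I → ℕ) : ∑ i, a i * (x i - y i) = 0 ↔ ∀ i, x i ≤ y i := by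
  simp [Finset.sum_eq_zero_iff, (ha _).ne', Nat.sub_eq_zero_iff_le]

section Level

variable {I B B1 B2 : Type*} [Fintype I] {a : I → ℕ} {l : ℕ}

theorem sum_epsOf_tensorE_of_level_zero (c1 : Crystal I B1) (c2 : Crystal I B2) {b1 : B1}
    (hb1 : ∑ i, a i * c1.eps i b1 = ∑ i, a i * c1.phi i b1) (b2 : B2) :
    ∑ i, a i * epsOf (tensorE c1 c2 i) (b1, b2)
      = levK a c2 b2 + ∑ i, a i * (c1.phi i b1 - c2.eps i b2) := by
  have hterm : ∀ i, a i * epsOf (tensorE c1 c2 i) (b1, b2) + a i * c1.phi i b1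
      = a i * c1.eps i b1 + (a i * c2.eps i b2 + a i * (c1.phi i b1 - c2.eps i b2)) := by
    intro i
    simp only [← mul_add, epsOf_tensorE]
    congr 1
    omega
  have hsum := Finset.sum_congr rfl fun i (_ : i ∈ Finset.univ) => hterm i
  simp only [Finset.sum_add_distrib] at hsum
  unfold levK
  omega

theorem IsPerfect.le_levK {c : Crystal I B} (h : IsPerfect a c l) (b : B) : l ≤ levK a c b :=
  h.lev_eq ▸ Nat.sInf_le ⟨b, rfl⟩

theorem sum_mul_single [DecidableEq I] {i0 : I} (ha0 : a i0 = 1) :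
    ∑ i, a i * (Pi.single i0 l : I → ℕ) i = l := by
  simp [Pi.single_apply, ha0]

theorem IsPerfect.exists_eps_eq_single [DecidableEq I] {c : Crystal I B} (h : IsPerfect a c l)
    {i0 : I} (ha0 : a i0 = 1) : ∃ b, levK a c b = l ∧ ∀ i, c.eps i b = (Pi.single i0 l : I → ℕ) i := by
  obtain ⟨b, hb, heps⟩ := h.eps_bij.surjOn (sum_mul_single ha0)
  exact ⟨b, hb, congrFun heps⟩

theorem IsPerfect.exists_phi_eq_single [DecidableEq I] {c : Crystal I B} (h : IsPerfect a c l)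
    {i0 : I} (ha0 : a i0 = 1) : ∃ b, levK a c b = l ∧ ∀ i, c.phi i b = (Pi.single i0 l : I → ℕ) i := by
  obtain ⟨b, hb, hphi⟩ := h.phi_bij.surjOn (sum_mul_single ha0)
  exact ⟨b, hb, congrFun hphi⟩

theorem tensorLev_eq {c1 : Crystal I B1} {c2 : Crystal I B2} {l1 l2 : ℕ} {i0 : I}
    (ha0 : a i0 = 1) (h1 : IsPerfect a c1 l1) (h2 : IsPerfect a c2 l2) (hle : l1 ≤ l2) :
    tensorLev a c1 c2 = l2 := by
  classical
  have hlower : ∀ p : B1 × B2, l2 ≤ ∑ i, a i * epsOf (tensorE c1 c2 i) p := fun ⟨b1, b2⟩ => by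
    rw [sum_epsOf_tensorE_of_level_zero c1 c2 (h1.level_zero b1)]
    exact (h2.le_levK b2).trans (Nat.le_add_right _ _)
  obtain ⟨b1, -, hphi⟩ := h1.exists_phi_eq_single ha0
  obtain ⟨b2, hb2, heps⟩ := h2.exists_eps_eq_single ha0
  have hattained : ∑ i, a i * epsOf (tensorE c1 c2 i) (b1, b2) = l2 := by
    have hphi_le : ∀ i, c1.phi i b1 ≤ c2.eps i b2 := fun i => by
      rw [hphi, heps, Pi.single_apply, Pi.single_apply]; split_ifs <;> omega
    rw [sum_epsOf_tensorE_of_level_zero c1 c2 (h1.level_zero b1), hb2,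
      Finset.sum_eq_zero fun i _ => by rw [Nat.sub_eq_zero_of_le (hphi_le i), mul_zero], add_zero]
  exact le_antisymm (Nat.sInf_le ⟨_, hattained⟩)
    (le_csInf ⟨_, _, hattained⟩ (Set.forall_mem_range.2 hlower))

end Level

/-- for perfect crystals with `lev(B1) ≤ lev(B2)`, `b1 ⊗ b2` is minimal in
`B1 ⊗ B2` iff `b2 ∈ (B2)_min` and `ε_i(b2) ≥ φ_i(b1)` for all `i`; in that case
`ε_i(b1 ⊗ b2) = ε_i(b2) + ε_i(b1) − φ_i(b1)` and `φ_i(b1 ⊗ b2) = φ_i(b2)`. -/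
theorem tensor_min_of_right_higher {I B1 B2 : Type*} [Fintype I] (i0 : I) (a : I → ℕ)
    (ha : ∀ i, 0 < a i) (ha0 : a i0 = 1)
    (c1 : Crystal I B1) (c2 : Crystal I B2) (l1 l2 : ℕ)
    (h1 : IsPerfect a c1 l1) (h2 : IsPerfect a c2 l2) (hle : l1 ≤ l2)
    (b1 : B1) (b2 : B2) :
    ((∑ i, a i * epsOf (tensorE c1 c2 i) (b1, b2)) = tensorLev a c1 c2 ↔
        levK a c2 b2 = lev a c2 ∧ ∀ i, c1.phi i b1 ≤ c2.eps i b2) ∧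
      ((∑ i, a i * epsOf (tensorE c1 c2 i) (b1, b2)) = tensorLev a c1 c2 →
        ∀ i, (epsOf (tensorE c1 c2 i) (b1, b2) : ℤ)
            = (c2.eps i b2 : ℤ) + (c1.eps i b1 : ℤ) - (c1.phi i b1 : ℤ) ∧
          epsOf (tensorF c1 c2 i) (b1, b2) = c2.phi i b2) := by
  have hmin_iff : (∑ i, a i * epsOf (tensorE c1 c2 i) (b1, b2)) = tensorLev a c1 c2 ↔
      levK a c2 b2 = lev a c2 ∧ ∀ i, c1.phi i b1 ≤ c2.eps i b2 := by
    rw [tensorLev_eq ha0 h1 h2 hle, h2.lev_eq,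
      sum_epsOf_tensorE_of_level_zero c1 c2 (h1.level_zero b1),
      ← sum_mul_tsub_eq_zero_iff ha]
    have := h2.le_levK b2
    omega
  refine ⟨hmin_iff, fun hmin i => ?_⟩
  have hphi_le := (hmin_iff.mp hmin).2 i
  simp only [epsOf_tensorE, epsOf_tensorF]
  exact ⟨by omega, by omega⟩
end

section
/- Let B1, B2 be I-crystals with 0 ∈ I, let σ : B1 ⊗ B2 → B2 ⊗ B1 be an isomorphism of I-crystals, and let H : B1 ⊗ B2 → ℤ be a local energy function with respect to σ. Let b1 ∈ B1, b2 ∈ B2 with σ(b1 ⊗ b2) = b̃2 ⊗ b̃1, and let j_1, …, j_ℓ ∈ I be a sequence with e_{j_ℓ} ⋯ e_{j_1}(b1 ⊗ b2) ≠ 0. Suppose e_{j_ℓ} ⋯ e_{j_1}(b1 ⊗ b2) = e_{i'_{ℓ−k}} ⋯ e_{i'_1} b1 ⊗ e_{i_k} ⋯ e_{i_1} b2 and e_{j_ℓ} ⋯ e_{j_1}(b̃2 ⊗ b̃1) = e_{ĩ_m} ⋯ e_{ĩ_1} b̃2 ⊗ e_{ĩ'_{ℓ−m}} ⋯ e_{ĩ'_1}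 b̃1, where the sequences (i_q), (i'_q), (ĩ_q), (ĩ'_q) record, in order, on which tensor factor each operator e_{j_q} acts according to the tensor-product rule (so {j_1,…,j_ℓ} = {i_1,…,i_k} ⊔ {i'_1,…,i'_{ℓ−k}} = {ĩ_1,…,ĩ_m} ⊔ {ĩ'_1,…,ĩ'_{ℓ−m}} as multisets). Then H(e_{j_ℓ} ⋯ e_{j_1}(b1 ⊗ b2)) − H(b1 ⊗ b2) = #{1 ≤ q ≤ m : ĩ_q = 0} − #{1 ≤ q ≤ k : i_q = 0}. -/
/-- `e_i` acts on the first tensor factor of `p = a ⊗ b` iff `φ_i(a) ≥ ε_i(b)`. -/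
def actsLeft {I A B : Type*} (cA : Crystal I A) (cB : Crystal I B) (i : I) (p : A × B) : Prop :=
  cB.eps i p.2 ≤ cA.phi i p.1

noncomputable instance {I A B : Type*} (cA : Crystal I A) (cB : Crystal I B) (i : I)
    (p : A × B) : Decidable (actsLeft cA cB i p) :=
  inferInstanceAs (Decidable (cB.eps i p.2 ≤ cA.phi i p.1))

/-- `σ : B1 ⊗ B2 → B2 ⊗ B1` is an isomorphism of `I`-crystals: a bijection commuting with
all `e_i` and `f_i` (sending `0` to `0`). -/
structure IsCrystalIso {I B1 B2 : Type*} (c1 : Crystal I B1) (c2 : Crystal I B2)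
    (σ : B1 × B2 → B2 × B1) : Prop where
  bij : Function.Bijective σ
  comm_e : ∀ (i : I) (p : B1 × B2), Option.map σ (tensorE c1 c2 i p) = tensorE c2 c1 i (σ p)
  comm_f : ∀ (i : I) (p : B1 × B2), Option.map σ (tensorF c1 c2 i p) = tensorF c2 c1 i (σ p)

/-- `H : B1 ⊗ B2 → ℤ` is a local energy function with respect to `σ`: it is unchanged by
`e_i` for `i ≠ 0`, and changes by `+1` (resp. `−1`, resp. `0`) under `e_0` according to
whether `e_0` acts on the left (resp. right, resp. mixed) factors of `x` and `σ(x)`. -/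
structure IsLocalEnergy {I B1 B2 : Type*} (i0 : I) (c1 : Crystal I B1) (c2 : Crystal I B2)
    (σ : B1 × B2 → B2 × B1) (H : B1 × B2 → ℤ) : Prop where
  ne_zero : ∀ (i : I), i ≠ i0 → ∀ (x y : B1 × B2), tensorE c1 c2 i x = some y → H y = H x
  zero_LL : ∀ (x y : B1 × B2), tensorE c1 c2 i0 x = some y →
    actsLeft c1 c2 i0 x → actsLeft c2 c1 i0 (σ x) → H y = H x + 1
  zero_RR : ∀ (x y : B1 × B2), tensorE c1 c2 i0 x = some y →
    ¬ actsLeft c1 c2 i0 x → ¬ actsLeft c2 c1 i0 (σ x) → H y = H x - 1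
  zero_mixed : ∀ (x y : B1 × B2), tensorE c1 c2 i0 x = some y →
    ¬ (actsLeft c1 c2 i0 x ↔ actsLeft c2 c1 i0 (σ x)) → H y = H x

/-- Apply a sequence of operators `e_{j_1}, …, e_{j_ℓ}` (in this order) to `x`. -/
def applyList {I X : Type*} (step : I → X → Option X) (J : List I) (x : X) : Option X :=
  J.foldl (fun o j => o.bind (step j)) (some x)

/-- Along the application of `e_{j_1}, …, e_{j_ℓ}` to `p ∈ A ⊗ B`, count the steps with
`j_q = i0` that act on the first factor (if `onFirst = true`) resp. on the second factor
(if `onFirst = false`), following the tensor-product rule. -/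
noncomputable def zeroCount {I A B : Type*} [DecidableEq I] (cA : Crystal I A)
    (cB : Crystal I B) (i0 : I) (onFirst : Bool) : List I → A × B → ℕ
  | [], _ => 0
  | j :: J, p =>
      (if j = i0 ∧ (actsLeft cA cB j p ↔ onFirst = true) then 1 else 0) +
        (tensorE cA cB j p).elim 0 (zeroCount cA cB i0 onFirst J)

/-!
Along the path `x_0 = b1 ⊗ b2, x_q = e_{j_q} x_{q-1}`, the energy changes only at steps with
`j_q = 0`, and there the three rules for `H` say exactly that `H x_q - H x_{q-1}` is
`[e_0 acts on the first factor of σ x_{q-1}] - [e_0 acts on the second factor of x_{q-1}]`.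
Since `σ` commutes with the `e_i`, the path of `σ(b1 ⊗ b2)` under `e_{j_1}, …, e_{j_ℓ}` is the
image under `σ` of the path of `b1 ⊗ b2`, so summing these increments telescopes to the claim.
-/

theorem applyList_cons {I X : Type*} (step : I → X → Option X) (j : I) (J : List I) (x : X) :
    applyList step (j :: J) x = (step j x).bind (applyList step J) := by
  suffices h : ∀ o : Option X,
      J.foldl (fun o j => o.bind (step j)) o = o.bind (applyList step J) from h (step j x)
  induction J with
  | nil => intro o; cases o <;> rfl
  | cons j' J ih =>
    intro o
    simp only [List.foldl_cons, ih, Option.bind_assoc]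
    congr 1
    funext x
    exact (ih (step j' x)).symm

section Tensor

variable {I A B : Type*} {cA : Crystal I A} {cB : Crystal I B}

theorem zeroCount_cons_of_tensorE_eq_some [DecidableEq I] (i0 : I) (onFirst : Bool)
    {j : I} (J : List I) {p q : A × B} (hq : tensorE cA cB j p = some q) :
    zeroCount cA cB i0 onFirst (j :: J) p =
      (if j = i0 ∧ (actsLeft cA cB j p ↔ onFirst = true) then 1 else 0) +
        zeroCount cA cB i0 onFirst J q := by
  simp only [zeroCount, hq, Option.elim_some]

theorem tensorE_map_eq_some {σ : A × B → B × A}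
    (hσ : ∀ i p, Option.map σ (tensorE cA cB i p) = tensorE cB cA i (σ p))
    {j : I} {p q : A × B} (hq : tensorE cA cB j p = some q) :
    tensorE cB cA j (σ p) = some (σ q) := by
  rw [← hσ, hq, Option.map_some]

end Tensor

section Energy

variable {I B1 B2 : Type*} {i0 : I} {c1 : Crystal I B1} {c2 : Crystal I B2}
  {σ : B1 × B2 → B2 × B1} {H : B1 × B2 → ℤ}

theorem IsLocalEnergy.sub_eq_of_tensorE_eq_some [DecidableEq I]
    (hH : IsLocalEnergy i0 c1 c2 σ H) {j : I} {p q : B1 × B2}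
    (hq : tensorE c1 c2 j p = some q) :
    H q - H p = (if j = i0 ∧ actsLeft c2 c1 j (σ p) then 1 else 0 : ℤ)
      - (if j = i0 ∧ ¬ actsLeft c1 c2 j p then 1 else 0 : ℤ) := by
  by_cases hj : j = i0
  · subst hj
    by_cases hL : actsLeft c1 c2 j p <;> by_cases hR : actsLeft c2 c1 j (σ p)
    · simp [hH.zero_LL p q hq hL hR, hL, hR]
    · simp [hH.zero_mixed p q hq (by tauto), hL, hR]
    · simp [hH.zero_mixed p q hq (by tauto), hL, hR]
    · simp [hH.zero_RR p q hq hL hR, hL, hR]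
  · simp [hH.ne_zero j hj p q hq, hj]

theorem IsLocalEnergy.sub_eq_zeroCount_sub [DecidableEq I]
    (hH : IsLocalEnergy i0 c1 c2 σ H)
    (hσ : ∀ i p, Option.map σ (tensorE c1 c2 i p) = tensorE c2 c1 i (σ p))
    (J : List I) {p y : B1 × B2} (hy : applyList (tensorE c1 c2) J p = some y) :
    H y - H p =
      (zeroCount c2 c1 i0 true J (σ p) : ℤ) - (zeroCount c1 c2 i0 false J p : ℤ) := by
  induction J generalizing p with
  | nil =>
    obtain rfl : p = y := Option.some.inj hy
    simp [zeroCount]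
  | cons j J ih =>
    rw [applyList_cons] at hy
    obtain ⟨q, hq, hqy⟩ := Option.bind_eq_some_iff.1 hy
    rw [zeroCount_cons_of_tensorE_eq_some i0 true J (tensorE_map_eq_some hσ hq),
      zeroCount_cons_of_tensorE_eq_some i0 false J hq]
    have hstep := hH.sub_eq_of_tensorE_eq_some hq
    simp only [iff_true, Bool.false_eq_true, iff_false] at hstep ⊢
    push_cast
    linarith [ih hqy]

end Energy

/-- if `e_{j_ℓ} ⋯ e_{j_1}(b1 ⊗ b2) = y ≠ 0`, then
`H(y) − H(b1 ⊗ b2) = #{q | ĩ_q = 0} − #{q | i_q = 0}`, where the `i_q` (resp. `ĩ_q`) are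
the operators among `j_1, …, j_ℓ` acting on the `b2`-factor of `b1 ⊗ b2` (resp. on the
`b̃2`-factor of `σ(b1 ⊗ b2) = b̃2 ⊗ b̃1`) according to the tensor-product rule. -/
theorem local_energy_count {I B1 B2 : Type*} [DecidableEq I] (i0 : I)
    (c1 : Crystal I B1) (c2 : Crystal I B2) (σ : B1 × B2 → B2 × B1)
    (hσ : IsCrystalIso c1 c2 σ) (H : B1 × B2 → ℤ) (hH : IsLocalEnergy i0 c1 c2 σ H)
    (b1 : B1) (b2 : B2) (J : List I) (y : B1 × B2)
    (hy : applyList (tensorE c1 c2) J (b1, b2) = some y) :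
    H y - H (b1, b2) =
      (zeroCount c2 c1 i0 true J (σ (b1, b2)) : ℤ)
        - (zeroCount c1 c2 i0 false J (b1, b2) : ℤ) :=
  hH.sub_eq_zeroCount_sub hσ.comm_e J hy
end
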